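/- Suppose A − 1/2 is an integer. Then for every κ > 0, every ℓ > 0 and every ℓ₃ ∈ (0,2π), the functions of the negative-energy spectral condition satisfy a(κ)² + b(κ)² > 0; consequently the negative part of the spectrum of the magnetic ring chain contains no flat band. -/
import Mathlib


open Real

/-- The function `a` of the negative-energy Floquet spectral condition of the
periodic magnetic ring chain (obtained by the substitution `k = iκ`), with
vertex coupling parameter `ℓ`, ring-arc lengths `2π - ℓ₃` and `ℓ₃`, and
magnetic potential `A`. -/
noncomputable def chainNegA (ℓ ℓ₃ A κ : ℝ) : ℝ :=
  -4 * (κ ^ 2 * ℓ ^ 2 - 1) * (Real.cos (A * ℓ₃) * Real.sinh (κ * (2 * π - ℓ₃))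
      + Real.cos (A * (2 * π - ℓ₃)) * Real.sinh (κ * ℓ₃))
    + 8 * κ * ℓ * (Real.sin (A * (2 * π - ℓ₃)) * Real.cosh (κ * ℓ₃)
      + Real.sin (A * ℓ₃) * Real.cosh (κ * (2 * π - ℓ₃)))

/-- The function `b` of the negative-energy Floquet spectral condition. -/
noncomputable def chainNegB (ℓ ℓ₃ A κ : ℝ) : ℝ :=
  4 * (κ ^ 2 * ℓ ^ 2 - 1) * (Real.sin (A * (2 * π - ℓ₃)) * Real.sinh (κ * ℓ₃)
      - Real.sin (A * ℓ₃) * Real.sinh (κ * (2 * π - ℓ₃)))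
    + 8 * κ * ℓ * (Real.cos (A * (2 * π - ℓ₃)) * Real.cosh (κ * ℓ₃)
      - Real.cos (A * ℓ₃) * Real.cosh (κ * (2 * π - ℓ₃)))

theorem stmt_8 (A : ℝ) (hA : ∃ m : ℤ, A - 1 / 2 = m) :
    ∀ κ : ℝ, 0 < κ → ∀ ℓ : ℝ, 0 < ℓ → ∀ ℓ₃ ∈ Set.Ioo 0 (2 * π),
      0 < (chainNegA ℓ ℓ₃ A κ) ^ 2 + (chainNegB ℓ ℓ₃ A κ) ^ 2 := by
  obtain ⟨m, hm⟩ := hA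
  intro κ hκ ℓ hℓ ℓ₃ hℓ₃
  have hAval : A = (m : ℝ) + 1 / 2 := by linarith
  have harg : A * (2 * π - ℓ₃) = (π - A * ℓ₃) + (m : ℝ) * (2 * π) := by
    rw [hAval]; ring
  have hsin : Real.sin (A * (2 * π - ℓ₃)) = Real.sin (A * ℓ₃) := by
    rw [harg, Real.sin_add_int_mul_two_pi, Real.sin_pi_sub]
  have hcos : Real.cos (A * (2 * π - ℓ₃)) = -Real.cos (A * ℓ₃) := by
    rw [harg, Real.cos_add_int_mul_two_pi, Real.cos_pi_sub]
  have hc1 : (1 : ℝ) ≤ Real.cosh (κ * ℓ₃) := Real.one_le_cosh _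
  have hc2 : (1 : ℝ) ≤ Real.cosh (κ * (2 * π - ℓ₃)) := Real.one_le_cosh _
  have hpyth := Real.sin_sq_add_cos_sq (A * ℓ₃)
  have hY : 0 < κ * ℓ * (Real.cosh (κ * ℓ₃) + Real.cosh (κ * (2 * π - ℓ₃))) := by
    positivity
  unfold chainNegA chainNegB
  rw [hsin, hcos]
  nlinarith [sq_nonneg ((κ ^ 2 * ℓ ^ 2 - 1) * (Real.sinh (κ * (2 * π - ℓ₃)) - Real.sinh (κ * ℓ₃))),
    sq_nonneg (κ * ℓ * (Real.cosh (κ * ℓ₃) + Real.cosh (κ * (2 * π - ℓ₃)))),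
    mul_pos hY hY, hpyth]
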